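/- arXiv:1710.05516 — 5 statements merged into one kernel-verified Lean document; each statement's English description precedes it below -/
import Mathlib

section
/- Let X₁, X₂ be ℤ-modules with X₂ torsion-free, let f : X₂ → X₁ be a surjective ℤ-module homomorphism, and let P ⊆ X₂ be a submodule such that the restriction of f to P is injective. Let P^⊤ = {x ∈ X₂ : n·x ∈ P for some integer n > 0}, set A = X₁/f(P^⊤), let h₁ : X₁ → A be the canonical projection, and let h₂ : X₂/P^⊤ → A be the well-defined map h₂(x + P^⊤) = f(x) + f(P^⊤). Then the map φ : X₂ → X₁ ⊕ (X₂/P^⊤) defined by φ(x) = (f(x), x + P^⊤) is an injective ℤ-module homomorphism whose image is exactly the fibre product X₁ ⊕_A (X₂/P^⊤) = {(x₁, y) : h₁(x₁) = h₂(y)}, and f = p₁ ∘ φ where p₁ is the projection of the fibre product onto X₁. -/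
/-- The fibre product `X₁ ⊕_A X₂` of two module homomorphisms `h₁ : X₁ → A`,
`h₂ : X₂ → A`, as a submodule of `X₁ × X₂`. -/
def fibreProd {R X₁ X₂ A : Type*} [Semiring R] [AddCommMonoid X₁] [AddCommMonoid X₂]
    [AddCommMonoid A] [Module R X₁] [Module R X₂] [Module R A]
    (h₁ : X₁ →ₗ[R] A) (h₂ : X₂ →ₗ[R] A) : Submodule R (X₁ × X₂) where
  carrier := {p | h₁ p.1 = h₂ p.2}
  add_mem' := by
    intro a b ha hb
    simp only [Set.mem_setOf_eq, Prod.fst_add, Prod.snd_add, map_add] at *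
    rw [ha, hb]
  zero_mem' := by simp
  smul_mem' := by
    intro c a ha
    simp only [Set.mem_setOf_eq, Prod.smul_fst, Prod.smul_snd, map_smul] at *
    rw [ha]

/-- The first projection `p₁` of the fibre product. -/
def fpFst {R X₁ X₂ A : Type*} [Semiring R] [AddCommMonoid X₁] [AddCommMonoid X₂]
    [AddCommMonoid A] [Module R X₁] [Module R X₂] [Module R A]
    (h₁ : X₁ →ₗ[R] A) (h₂ : X₂ →ₗ[R] A) : fibreProd h₁ h₂ →ₗ[R] X₁ :=
  LinearMap.fst R X₁ X₂ ∘ₗ (fibreProd h₁ h₂).subtype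

/-- The second projection `p₂` of the fibre product. -/
def fpSnd {R X₁ X₂ A : Type*} [Semiring R] [AddCommMonoid X₁] [AddCommMonoid X₂]
    [AddCommMonoid A] [Module R X₁] [Module R X₂] [Module R A]
    (h₁ : X₁ →ₗ[R] A) (h₂ : X₂ →ₗ[R] A) : fibreProd h₁ h₂ →ₗ[R] X₂ :=
  LinearMap.snd R X₁ X₂ ∘ₗ (fibreProd h₁ h₂).subtype

/-- On a submodule of a ℤ-module we always use the induced module structure. -/
instance (priority := 10000) submoduleIntModule {M : Type*} [AddCommGroup M] [Module ℤ M]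
    (p : Submodule ℤ M) : Module ℤ p := p.module

/-- On a quotient of a ℤ-module we always use the induced module structure. -/
instance (priority := 10000) quotientIntModule {M : Type*} [AddCommGroup M] [Module ℤ M]
    (p : Submodule ℤ M) : Module ℤ (M ⧸ p) := Submodule.Quotient.module p

/-- On a product of ℤ-modules we always use the product module structure. -/
instance (priority := 10000) prodIntModule {M N : Type*} [AddCommGroup M] [AddCommGroup N]
    [Module ℤ M] [Module ℤ N] : Module ℤ (M × N) := Prod.instModule

/-- The saturation `P^⊤ = {x ∈ X : n • x ∈ P for some integer n > 0}` of a submodule `P`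
of a ℤ-module `X`. -/
def saturation {X : Type*} [AddCommGroup X] (P : Submodule ℤ X) :
    Submodule ℤ X where
  carrier := {x | ∃ n : ℤ, 0 < n ∧ n • x ∈ P}
  zero_mem' := ⟨1, one_pos, by simp⟩
  add_mem' := by
    rintro x y ⟨n, hn, hx⟩ ⟨m, hm, hy⟩
    refine ⟨n * m, mul_pos hn hm, ?_⟩
    have h1 : (n * m) • (x + y) = m • (n • x) + n • (m • y) := by
      rw [smul_add, mul_comm n m, mul_smul, mul_comm m n, mul_smul]
    rw [h1]
    exact P.add_mem (P.smul_mem m hx) (P.smul_mem n hy)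
  smul_mem' := by
    rintro c x ⟨n, hn, hx⟩
    exact ⟨n, hn, by rw [smul_comm]; exact P.smul_mem c hx⟩

/-! Since `f` is injective on `P` and `X₂` is torsion-free, `f` is injective on `P^⊤`: if
`f x = 0` and `n • x ∈ P`, then `f (n • x) = 0` forces `n • x = 0`, hence `x = 0`. So the kernels of
`f` and of `X₂ → X₂/P^⊤` meet trivially, i.e. `φ` is injective. The image statement holds for any
linear map `f` and any submodule `S`: `(x₁, x + S)` lies in the fibre product iff `x₁ = f (x + s)`
for some `s ∈ S`, and then it is `φ (x + s)`. -/

theorem mem_fibreProd {R X₁ X₂ A : Type*} [Semiring R] [AddCommMonoid X₁] [AddCommMonoid X₂]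
    [AddCommMonoid A] [Module R X₁] [Module R X₂] [Module R A]
    {h₁ : X₁ →ₗ[R] A} {h₂ : X₂ →ₗ[R] A} {p : X₁ × X₂} :
    p ∈ fibreProd h₁ h₂ ↔ h₁ p.1 = h₂ p.2 :=
  Iff.rfl

theorem disjoint_saturation_ker {X Y : Type*} [AddCommGroup X] [AddCommGroup Y]
    [NoZeroSMulDivisors ℤ X] {f : X →ₗ[ℤ] Y} {P : Submodule ℤ X} (hinj : Set.InjOn f P) :
    Disjoint (saturation P) (LinearMap.ker f) := by
  refine Submodule.disjoint_def.mpr ?_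
  rintro x ⟨n, hn, hnx⟩ hx
  have hnx_zero : n • x = 0 :=
    hinj hnx P.zero_mem (by rw [map_zsmul, LinearMap.mem_ker.mp hx, smul_zero, map_zero])
  exact (smul_eq_zero.mp hnx_zero).resolve_left hn.ne'

namespace LinearMap

variable {R M N : Type*} [Ring R] [AddCommGroup M] [AddCommGroup N] [Module R M] [Module R N]
  (f : M →ₗ[R] N) (S : Submodule R M)

theorem injective_prod_mkQ_iff : Function.Injective (f.prod S.mkQ) ↔ Disjoint S (ker f) := by
  rw [← ker_eq_bot, ker_prod, Submodule.ker_mkQ, inf_comm, disjoint_iff]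

theorem range_prod_mkQ_eq_fibreProd :
    range (f.prod S.mkQ) =
      fibreProd (S.map f).mkQ (S.mapQ (S.map f) f (Submodule.le_comap_map f S)) := by
  ext ⟨y, z⟩
  obtain ⟨x, rfl⟩ := S.mkQ_surjective z
  simp only [mem_fibreProd, Submodule.mkQ_apply, Submodule.mapQ_apply, Submodule.Quotient.eq]
  constructor
  · rintro ⟨x', hx'⟩
    obtain ⟨rfl, hs⟩ := Prod.ext_iff.mp hx'
    exact ⟨x' - x, (Submodule.Quotient.eq S).mp hs, map_sub f x' x⟩
  · rintro ⟨s, hs, hfs⟩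
    refine ⟨x + s, Prod.ext ?_ ?_⟩
    · simp [hfs]
    · simpa [Submodule.Quotient.eq] using hs

end LinearMap

theorem derived_embedding_central_product_general
    {X₁ X₂ : Type*} [AddCommGroup X₁] [AddCommGroup X₂]
    [NoZeroSMulDivisors ℤ X₂]
    (f : X₂ →ₗ[ℤ] X₁)
    (P : Submodule ℤ X₂) (hinj : Set.InjOn f (P : Set X₂)) :
    Function.Injective (f.prod (saturation P).mkQ) ∧
    LinearMap.range (f.prod (saturation P).mkQ) =
      fibreProd (Submodule.map f (saturation P)).mkQ
        (Submodule.mapQ (saturation P) (Submodule.map f (saturation P)) f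
          (fun x hx => Submodule.mem_comap.mpr (Submodule.mem_map_of_mem hx))) ∧
    (∀ x : X₂, f x = (f.prod (saturation P).mkQ x).1) :=
  ⟨(f.injective_prod_mkQ_iff _).mpr (disjoint_saturation_ker hinj),
    f.range_prod_mkQ_eq_fibreProd _, fun _ => rfl⟩

/-- Let `X₂` be a torsion-free ℤ-module, `f : X₂ → X₁` a surjective
ℤ-module homomorphism and `P ⊆ X₂` a submodule on which `f` is injective. With
`A = X₁ / f(P^⊤)`, `h₁ : X₁ → A` the canonical projection and
`h₂ : X₂/P^⊤ → A`, `h₂(x + P^⊤) = f(x) + f(P^⊤)`, the induced map, the map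
`φ(x) = (f x, x + P^⊤)` is an injective ℤ-module homomorphism `X₂ → X₁ ⊕ (X₂/P^⊤)` whose
image is exactly the fibre product `X₁ ⊕_A (X₂/P^⊤)`, and `f = p₁ ∘ φ`. -/
theorem derived_embedding_central_product
    {X₁ X₂ : Type*} [AddCommGroup X₁] [AddCommGroup X₂]
    [NoZeroSMulDivisors ℤ X₂]
    (f : X₂ →ₗ[ℤ] X₁) (hf : Function.Surjective f)
    (P : Submodule ℤ X₂) (hinj : Set.InjOn f (P : Set X₂)) :
    Function.Injective (f.prod (saturation P).mkQ) ∧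
    LinearMap.range (f.prod (saturation P).mkQ) =
      fibreProd (Submodule.map f (saturation P)).mkQ
        (Submodule.mapQ (saturation P) (Submodule.map f (saturation P)) f
          (fun x hx => Submodule.mem_comap.mpr (Submodule.mem_map_of_mem hx))) ∧
    (∀ x : X₂, f x = (f.prod (saturation P).mkQ x).1) :=
  derived_embedding_central_product_general f P hinj
end

section
/- Let n ≥ 1 be an integer, let T be a free ℤ-module of finite rank at least 2, and let f : T → ℤ/nℤ be a surjective ℤ-module homomorphism. Then every automorphism ψ of ℤ/nℤ is tame with respect to (T, f): there exists an automorphism τ of T with ψ ∘ f = f ∘ τ. (The rank-2 case is achieved by an automorphism of T of determinant 1, obtained from a Bézout identity k·a + n·b = 1.) -/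
/-!
`ψ` is multiplication by `ψ 1`, hence by an integer `k` prime to `n`, say `a k + b n = 1`.
Lift `f` to `F : T → ℤ` and write `F = d • F₁` with `F₁` surjective; as the rank is at least 2,
`F₁` is the first coordinate of a surjection `Φ = (F₁, G) : T → ℤ²`. The matrix
`[[k, n], [-b, a]]` has determinant 1, and every automorphism `A` of `ℤ²` lifts along the split
surjection `Φ` to an automorphism `τ` of `T` with `Φ ∘ τ = A ∘ Φ`. Then
`F (τ t) = d (k F₁ t + n G t) ≡ k F t (mod n)`, i.e. `f ∘ τ = ψ ∘ f`.
-/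

open Function Module

section LiftAlongSection

variable {R M N : Type*} [CommRing R] [AddCommGroup M] [Module R M] [AddCommGroup N] [Module R N]

def liftEnd (s : N →ₗ[R] M) (Φ : M →ₗ[R] N) (B : N →ₗ[R] N) : M →ₗ[R] M :=
  LinearMap.id + s ∘ₗ (B - LinearMap.id) ∘ₗ Φ

variable {s : N →ₗ[R] M} {Φ : M →ₗ[R] N}

lemma comp_liftEnd (hs : Φ ∘ₗ s = LinearMap.id) (B : N →ₗ[R] N) :
    Φ ∘ₗ liftEnd s Φ B = B ∘ₗ Φ := by
  have hs' : ∀ x, Φ (s x) = x := LinearMap.congr_fun hs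
  ext t
  simp [liftEnd, hs']

lemma liftEnd_comp (hs : Φ ∘ₗ s = LinearMap.id) (B C : N →ₗ[R] N) :
    liftEnd s Φ B ∘ₗ liftEnd s Φ C = liftEnd s Φ (B ∘ₗ C) := by
  have hs' : ∀ x, Φ (s x) = x := LinearMap.congr_fun hs
  ext t
  simp only [liftEnd, LinearMap.comp_apply, LinearMap.add_apply, LinearMap.id_apply,
    LinearMap.sub_apply, map_add, map_sub, hs', add_sub_cancel]
  abel

@[simp] lemma liftEnd_id : liftEnd s Φ LinearMap.id = LinearMap.id := by
  simp [liftEnd]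

theorem exists_linearEquiv_comp_eq_comp_of_surjective [Projective R N] (hΦ : Surjective Φ)
    (A : N ≃ₗ[R] N) : ∃ τ : M ≃ₗ[R] M, Φ ∘ₗ τ = A ∘ₗ Φ := by
  obtain ⟨s, hs⟩ := projective_lifting_property Φ LinearMap.id hΦ
  refine ⟨.ofLinearMap (liftEnd s Φ A) (liftEnd s Φ A.symm) ?_ ?_, comp_liftEnd hs _⟩ <;>
    simp [liftEnd_comp hs]

end LiftAlongSection

theorem exists_linearEquiv_prod_fst_eq_of_isCoprime {R : Type*} [CommRing R] {k n : R}
    (h : IsCoprime k n) : ∃ A : (R × R) ≃ₗ[R] R × R, ∀ v, (A v).1 = k * v.1 + n * v.2 := by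
  obtain ⟨a, b, hab⟩ := h
  let A : (R × R) →ₗ[R] R × R :=
    (k • LinearMap.fst R R R + n • LinearMap.snd R R R).prod
      (-b • LinearMap.fst R R R + a • LinearMap.snd R R R)
  let B : (R × R) →ₗ[R] R × R :=
    (a • LinearMap.fst R R R - n • LinearMap.snd R R R).prod
      (b • LinearMap.fst R R R + k • LinearMap.snd R R R)
  have hAB : A ∘ₗ B = .id := by ext <;> simp [A, B] <;> grind
  have hBA : B ∘ₗ A = .id := by ext <;> simp [A, B] <;> grind
  exact ⟨.ofLinearMap A B hAB hBA, fun v => rfl⟩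

theorem ZMod.exists_isCoprime_forall_eq_mul {n : ℕ} (ψ : ZMod n ≃+ ZMod n) :
    ∃ k : ℤ, IsCoprime k n ∧ ∀ x, ψ x = k * x := by
  have hmul : ∀ x, ψ x = ψ 1 * x := fun x => by
    rw [← ZMod.intCast_zmod_cast x, ← zsmul_one, map_zsmul, zsmul_eq_mul, mul_comm, zsmul_one]
  refine ⟨(ψ 1).cast, ?_, by simpa only [ZMod.intCast_zmod_cast] using hmul⟩
  obtain ⟨y, hy⟩ := ψ.surjective 1
  have hunit : IsUnit (((ψ 1).cast : ℤ) : ZMod n) := by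
    rw [ZMod.intCast_zmod_cast]
    exact IsUnit.of_mul_eq_one y (hmul y ▸ hy)
  exact ((ZMod.coe_int_isUnit_iff_isCoprime _ n).mp hunit).symm

theorem Module.Free.exists_dual_surjective (R M : Type*) [CommRing R] [AddCommGroup M]
    [Module R M] [Free R M] [Nontrivial M] : ∃ G : M →ₗ[R] R, Surjective G := by
  obtain ⟨i⟩ := (Free.chooseBasis R M).index_nonempty
  exact ⟨(Free.chooseBasis R M).coord i, fun r => ⟨r • Free.chooseBasis R M i, by simp⟩⟩

theorem LinearMap.prod_surjective_of_surjective_ker {R M N P : Type*} [CommRing R]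
    [AddCommGroup M] [Module R M] [AddCommGroup N] [Module R N] [AddCommGroup P] [Module R P]
    {F : M →ₗ[R] N} {G : M →ₗ[R] P} (hF : Surjective F)
    (hG : Surjective (G ∘ₗ (LinearMap.ker F).subtype)) : Surjective (F.prod G) := by
  rintro ⟨x, y⟩
  obtain ⟨t, rfl⟩ := hF x
  obtain ⟨⟨u, hu⟩, hGu⟩ := hG (y - G t)
  have hFu : F u = 0 := hu
  have hGu : G u = y - G t := hGu
  exact ⟨t + u, by simp [hFu, hGu]⟩

section PID

variable {R M : Type*} [CommRing R] [IsDomain R] [IsPrincipalIdealRing R]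
  [AddCommGroup M] [Module R M] [Free R M]

theorem LinearMap.exists_surjective_eq_smul [Nontrivial M] (F : M →ₗ[R] R) :
    ∃ (d : R) (F₁ : M →ₗ[R] R), Surjective F₁ ∧ F = d • F₁ := by
  obtain ⟨d, hd⟩ := Submodule.IsPrincipal.principal (LinearMap.range F)
  rcases eq_or_ne d 0 with rfl | hd0
  · obtain ⟨G, hG⟩ := Free.exists_dual_surjective R M
    refine ⟨0, G, hG, ?_⟩
    ext t
    simpa [hd] using LinearMap.mem_range_self F t
  · let e : LinearMap.range F ≃ₗ[R] R :=
      (LinearEquiv.ofEq _ _ hd).trans (LinearEquiv.toSpanNonzeroSingleton R R d hd0).symm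
    refine ⟨d, e ∘ₗ F.rangeRestrict, e.surjective.comp F.surjective_rangeRestrict, ?_⟩
    ext t
    have := LinearEquiv.toSpanNonzeroSingleton_symm_apply_smul R R d hd0
      (LinearEquiv.ofEq _ _ hd (F.rangeRestrict t))
    simpa [e, mul_comm] using this.symm

theorem LinearMap.exists_surjective_prod [Module.Finite R M] {F : M →ₗ[R] R}
    (hF : Surjective F) (hM : 2 ≤ finrank R M) : ∃ G : M →ₗ[R] R, Surjective (F.prod G) := by
  have : Nontrivial (LinearMap.ker F) := by
    refine Submodule.nontrivial_iff_ne_bot.mpr fun h => ?_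
    have := LinearMap.finrank_le_finrank_of_injective (LinearMap.ker_eq_bot.mp h)
    rw [finrank_self] at this
    omega
  obtain ⟨G₀, hG₀⟩ := Free.exists_dual_surjective R (LinearMap.ker F)
  obtain ⟨t₀, ht₀⟩ := hF 1
  let π : M →ₗ[R] LinearMap.ker F :=
    (LinearMap.id - F.smulRight t₀).codRestrict (LinearMap.ker F) fun t => by simp [ht₀]
  have hπ : ∀ t, (π t : M) = t - F t • t₀ := fun t => rfl
  refine ⟨G₀ ∘ₗ π, F.prod_surjective_of_surjective_ker hF ?_⟩
  convert hG₀ using 1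
  ext ⟨u, hu⟩
  have hFu : F u = 0 := hu
  simp only [LinearMap.comp_apply, Submodule.subtype_apply]
  congr 1
  ext
  simp [hπ, hFu]

end PID

theorem tame_rank_ge_two_general (n : ℕ)
    {T : Type*} [AddCommGroup T] [Module ℤ T] [Module.Free ℤ T] [Module.Finite ℤ T]
    (hrk : 2 ≤ Module.finrank ℤ T)
    (f : T →ₗ[ℤ] ZMod n)
    (ψ : ZMod n ≃+ ZMod n) :
    ∃ τ : T ≃ₗ[ℤ] T, ∀ t : T, ψ (f t) = f (τ t) := by
  obtain ⟨k, hk, hψ⟩ := ZMod.exists_isCoprime_forall_eq_mul ψ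
  obtain ⟨F, hF⟩ := projective_lifting_property (Algebra.linearMap ℤ (ZMod n)) f
    ZMod.intCast_surjective
  have : Nontrivial T := nontrivial_of_finrank_pos (R := ℤ) (by omega)
  obtain ⟨d, F₁, hF₁, rfl⟩ := F.exists_surjective_eq_smul
  obtain ⟨G, hG⟩ := F₁.exists_surjective_prod hF₁ hrk
  obtain ⟨A, hA⟩ := exists_linearEquiv_prod_fst_eq_of_isCoprime hk
  obtain ⟨τ, hτ⟩ := exists_linearEquiv_comp_eq_comp_of_surjective hG A
  have hτF₁ : ∀ t, F₁ (τ t) = k * F₁ t + n * G t := fun t => by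
    simpa [hA] using congr(($hτ t).1)
  refine ⟨τ, fun t => ?_⟩
  rw [hψ, ← hF]
  simp [hτF₁]
  ring

/-- Let `n ≥ 1`, let `T` be a free ℤ-module of finite rank at least 2 and
let `f : T → ℤ/nℤ` be a surjective ℤ-module homomorphism. Then every automorphism `ψ` of
`ℤ/nℤ` is tame with respect to `(T, f)`: there is an automorphism `τ` of `T` with
`ψ ∘ f = f ∘ τ`. -/
theorem tame_rank_ge_two (n : ℕ) (hn : 1 ≤ n)
    {T : Type*} [AddCommGroup T] [Module ℤ T] [Module.Free ℤ T] [Module.Finite ℤ T]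
    (hrk : 2 ≤ Module.finrank ℤ T)
    (f : T →ₗ[ℤ] ZMod n) (hf : Function.Surjective f)
    (ψ : ZMod n ≃+ ZMod n) :
    ∃ τ : T ≃ₗ[ℤ] T, ∀ t : T, ψ (f t) = f (τ t) :=
  tame_rank_ge_two_general n hrk f ψ
end

section
/- Let T be a finitely generated free ℤ-module, let A be a finite abelian group, and let f, f′ : T → A be two surjective group homomorphisms. Then there exist an automorphism λ of T and an automorphism ψ of A such that f′ = ψ ∘ f ∘ λ. -/
/-!
By Smith normal form, the kernel of a surjection `f : T → A` is spanned by `d₁ • b₁, …, dₙ • bₙ`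
for a basis `b` of `T` and nonzero `dᵢ`. Replacing a pair `dᵢ, dⱼ` by `gcd, lcm` only changes the
basis (a unimodular change of `bᵢ, bⱼ`), so one may assume `d₁ ∣ d₂ ∣ ⋯ ∣ dₙ`. Then
`A ≃+ ∏ ZMod dᵢ`, and such a chain is determined by `A`: the number of `x : A` with `m • x = 0`
is `∏ gcd dᵢ m`. So `ker f` and `ker f'` have adapted bases `b`, `b'` with the same diagonal, and
the automorphism `b'ᵢ ↦ bᵢ` carries `ker f'` onto `ker f`.
-/

open Finset Function Module

theorem Finset.eq_of_isUpperSet_of_card_eq {α : Type*} [LinearOrder α] {s t : Finset α}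
    (hs : IsUpperSet (s : Set α)) (ht : IsUpperSet (t : Set α)) (h : #s = #t) : s = t := by
  rcases hs.total ht with hst | hts
  · exact eq_of_subset_of_card_le (coe_subset.1 hst) h.ge
  · exact (eq_of_subset_of_card_le (coe_subset.1 hts) h.le).symm

theorem Pi.toLex_update_update_lt {ι β : Type*} [LinearOrder ι] [LT β] {x : ι → β} {i j : ι}
    (hij : i < j) {a b : β} (ha : a < x i) : toLex (update (update x i a) j b) < toLex x :=
  ⟨i, fun k hk => by simp [hk.ne, (hk.trans hij).ne], by simpa [hij.ne] using ha⟩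

theorem Nat.gcd_prime_pow_succ {p : ℕ} (hp : p.Prime) (c k : ℕ) :
    gcd c (p ^ (k + 1)) = gcd c (p ^ k) * if p ^ (k + 1) ∣ c then p else 1 := by
  split_ifs with h
  · rw [Nat.gcd_eq_right h, Nat.gcd_eq_right ((pow_dvd_pow p k.le_succ).trans h), pow_succ]
  · rw [mul_one]
    refine Nat.dvd_antisymm ?_ (Nat.gcd_dvd_gcd_of_dvd_right _ (pow_dvd_pow p k.le_succ))
    obtain ⟨m, hm, hgm⟩ := (Nat.dvd_prime_pow hp).1 (Nat.gcd_dvd_right c (p ^ (k + 1)))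
    have hmk : m ≤ k := by
      by_contra! hkm
      exact h (by rw [← Nat.le_antisymm hm hkm, ← hgm]; exact Nat.gcd_dvd_left _ _)
    exact Nat.dvd_gcd (Nat.gcd_dvd_left _ _) (hgm ▸ pow_dvd_pow p hmk)

theorem Nat.prod_gcd_prime_pow_succ {ι : Type*} [Fintype ι] {p : ℕ} (hp : p.Prime)
    (c : ι → ℕ) (k : ℕ) :
    ∏ i, gcd (c i) (p ^ (k + 1)) = (∏ i, gcd (c i) (p ^ k)) * p ^ #{i | p ^ (k + 1) ∣ c i} := by
  simp_rw [Nat.gcd_prime_pow_succ hp, prod_mul_distrib, prod_ite, prod_const_one, mul_one,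
    prod_const]

def IsDvdChain {ι : Type*} [Preorder ι] (c : ι → ℕ) : Prop :=
  ∀ ⦃i j⦄, i ≤ j → c i ∣ c j

namespace IsDvdChain

variable {ι : Type*} [LinearOrder ι] {c c' : ι → ℕ}

theorem isUpperSet_setOf_dvd (hc : IsDvdChain c) (m : ℕ) : IsUpperSet {i | m ∣ c i} :=
  fun _ _ hij hi => hi.trans (hc hij)

/-- The products at `p ^ (k + 1)` and `p ^ k` differ by `p` to the number of entries divisible
by `p ^ (k + 1)`, and these entries form a final segment. -/
theorem eq_of_prod_gcd_eq [Fintype ι] (hc : IsDvdChain c) (hc' : IsDvdChain c')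
    (h : ∀ m, ∏ i, Nat.gcd (c i) m = ∏ i, Nat.gcd (c' i) m) : c = c' := by
  have hpow (p k : ℕ) (hp : p.Prime) (i : ι) : p ^ k ∣ c i ↔ p ^ k ∣ c' i := by
    cases k with
    | zero => simp
    | succ k =>
      have hcard : #{i | p ^ (k + 1) ∣ c i} = #{i | p ^ (k + 1) ∣ c' i} := by
        have hprod := h (p ^ (k + 1))
        rw [Nat.prod_gcd_prime_pow_succ hp, Nat.prod_gcd_prime_pow_succ hp, h,
          Nat.mul_right_inj (prod_ne_zero_iff.2 fun i _ =>
            (Nat.gcd_pos_of_pos_right _ (pow_pos hp.pos k)).ne')] at hprod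
        exact Nat.pow_right_injective hp.two_le hprod
      have hset := eq_of_isUpperSet_of_card_eq (by simpa using hc.isUpperSet_setOf_dvd _)
        (by simpa using hc'.isUpperSet_setOf_dvd _) hcard
      simpa using congr(i ∈ $hset)
  funext i
  exact Nat.dvd_antisymm ((Nat.dvd_iff_prime_pow_dvd_dvd _ _).2 fun p k hp => (hpow p k hp i).1)
    ((Nat.dvd_iff_prime_pow_dvd_dvd _ _).2 fun p k hp => (hpow p k hp i).2)

end IsDvdChain

theorem AddEquiv.card_ker_nsmulAddMonoidHom {G H : Type*} [AddCommGroup G] [AddCommGroup H]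
    (φ : G ≃+ H) (m : ℕ) :
    Nat.card (nsmulAddMonoidHom m : G →+ G).ker = Nat.card (nsmulAddMonoidHom m : H →+ H).ker :=
  Nat.card_congr <| φ.toEquiv.subtypeEquiv fun x => by
    change m • x = 0 ↔ m • φ x = 0
    rw [← map_nsmul, AddEquiv.map_eq_zero_iff]

theorem card_ker_nsmulAddMonoidHom_pi_zmod {ι : Type*} [Fintype ι] (c : ι → ℕ)
    (hc : ∀ i, c i ≠ 0) (m : ℕ) :
    Nat.card (nsmulAddMonoidHom m : (∀ i, ZMod (c i)) →+ _).ker = ∏ i, Nat.gcd (c i) m := by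
  have : ∀ i, NeZero (c i) := fun i => ⟨hc i⟩
  calc Nat.card (nsmulAddMonoidHom m : (∀ i, ZMod (c i)) →+ _).ker
      = Nat.card (∀ i, (nsmulAddMonoidHom m : ZMod (c i) →+ _).ker) :=
        Nat.card_congr <| (Equiv.subtypeEquivRight fun x => by
            simp [AddMonoidHom.mem_ker, funext_iff]).trans
          (Equiv.subtypePiEquivPi (p := fun i (y : ZMod (c i)) => m • y = 0))
    _ = ∏ i, Nat.gcd (c i) m := by
      rw [Nat.card_pi]
      congr! with i
      rw [IsAddCyclic.card_nsmulAddMonoidHom_ker, Nat.card_zmod]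

theorem IsDvdChain.eq_of_addEquiv_pi_zmod {ι : Type*} [LinearOrder ι] [Fintype ι] {c c' : ι → ℕ}
    (hc : IsDvdChain c) (hc' : IsDvdChain c') (hc0 : ∀ i, c i ≠ 0) (hc0' : ∀ i, c' i ≠ 0)
    (φ : (∀ i, ZMod (c i)) ≃+ ∀ i, ZMod (c' i)) : c = c' :=
  hc.eq_of_prod_gcd_eq hc' fun m => by
    rw [← card_ker_nsmulAddMonoidHom_pi_zmod c hc0, ← card_ker_nsmulAddMonoidHom_pi_zmod c' hc0',
      φ.card_ker_nsmulAddMonoidHom]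

theorem AddMonoidHom.exists_addEquiv_of_ker_eq {G A B : Type*} [AddGroup G] [AddGroup A]
    [AddGroup B] {f : G →+ A} {g : G →+ B} (hf : Surjective f) (hg : Surjective g)
    (h : f.ker = g.ker) : ∃ ψ : A ≃+ B, ∀ x, g x = ψ (f x) :=
  ⟨(QuotientAddGroup.quotientKerEquivOfSurjective f hf).symm.trans <|
      (QuotientAddGroup.quotientAddEquivOfEq h).trans
        (QuotientAddGroup.quotientKerEquivOfSurjective g hg),
    fun x => by
      have hx : (QuotientAddGroup.quotientKerEquivOfSurjective f hf).symm (f x) =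
          (x : G ⧸ f.ker) := by
        rw [AddEquiv.symm_apply_eq]; rfl
      rw [AddEquiv.trans_apply, AddEquiv.trans_apply, hx]
      rfl⟩

namespace Module.Basis

section TwoByTwo

variable {ι R M : Type*} [CommRing R] [AddCommGroup M] [Module R M] [DecidableEq ι]

noncomputable def twoByTwo (b : Basis ι R M) (i j : ι) (p q r s : R) : M →ₗ[R] M :=
  b.constr R (update (update b i (p • b i + r • b j)) j (q • b i + s • b j))

theorem twoByTwo_comp_adjugate (b : Basis ι R M) {i j : ι} (hij : i ≠ j) {p q r s : R}
    (h : p * s - q * r = 1) : b.twoByTwo i j p q r s ∘ₗ b.twoByTwo i j s (-q) (-r) p = .id := by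
  refine b.ext fun k => ?_
  rcases eq_or_ne k j with rfl | hkj
  · simp [twoByTwo, constr_basis, hij]
    linear_combination (norm := module) h • b k
  rcases eq_or_ne k i with rfl | hki
  · simp [twoByTwo, constr_basis, hij]
    linear_combination (norm := module) h • b k
  · simp [twoByTwo, constr_basis, hki, hkj]

noncomputable def twoByTwoBasis (b : Basis ι R M) {i j : ι} (hij : i ≠ j) {p q r s : R}
    (h : p * s - q * r = 1) : Basis ι R M :=
  b.map <| .ofLinearMap _ _ (b.twoByTwo_comp_adjugate hij h)
    (by simpa using b.twoByTwo_comp_adjugate hij (show s * p - -q * -r = 1 by linear_combination h))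

variable (b : Basis ι R M) {i j : ι} (hij : i ≠ j) {p q r s : R} (h : p * s - q * r = 1)

theorem twoByTwoBasis_apply_left : b.twoByTwoBasis hij h i = p • b i + r • b j := by
  simp [twoByTwoBasis, twoByTwo, constr_basis, hij]

theorem twoByTwoBasis_apply_right : b.twoByTwoBasis hij h j = q • b i + s • b j := by
  simp [twoByTwoBasis, twoByTwo, constr_basis]

theorem twoByTwoBasis_apply_of_ne {k : ι} (hki : k ≠ i) (hkj : k ≠ j) :
    b.twoByTwoBasis hij h k = b k := by
  simp [twoByTwoBasis, twoByTwo, constr_basis, hki, hkj]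

end TwoByTwo

variable {ι M : Type*} [AddCommGroup M]

def diagSpan (b : Basis ι ℤ M) (d : ι → ℕ) : Submodule ℤ M :=
  Submodule.span ℤ (Set.range fun i => (d i : ℤ) • b i)

theorem mem_span_range_smul_iff [Fintype ι] (b : Basis ι ℤ M) (a : ι → ℤ) {x : M} :
    x ∈ Submodule.span ℤ (Set.range fun i => a i • b i) ↔ ∀ i, a i ∣ b.repr x i := by
  classical
  rw [Submodule.mem_span_range_iff_exists_fun]
  constructor
  · rintro ⟨c, rfl⟩ i
    simp [map_sum, Finsupp.single_apply, smul_smul]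
  · intro h
    choose c hc using h
    refine ⟨c, ?_⟩
    conv_rhs => rw [← b.sum_repr x]
    simp [hc, smul_smul, mul_comm]

theorem mem_diagSpan_iff [Fintype ι] (b : Basis ι ℤ M) (d : ι → ℕ) {x : M} :
    x ∈ b.diagSpan d ↔ ∀ i, (d i : ℤ) ∣ b.repr x i :=
  b.mem_span_range_smul_iff _

theorem smul_mem_diagSpan (b : Basis ι ℤ M) (d : ι → ℕ) (i : ι) :
    (d i : ℤ) • b i ∈ b.diagSpan d :=
  Submodule.subset_span ⟨i, rfl⟩

theorem diagSpan_le_iff (b : Basis ι ℤ M) (d : ι → ℕ) {S : Submodule ℤ M} :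
    b.diagSpan d ≤ S ↔ ∀ i, (d i : ℤ) • b i ∈ S := by
  rw [diagSpan, Submodule.span_le, Set.range_subset_iff]
  rfl

theorem diagSpan_eq_of_pair (b b' : Basis ι ℤ M) {d e : ι → ℕ} {i j : ι}
    (hne : ∀ k, k ≠ i → k ≠ j → (e k : ℤ) • b' k = (d k : ℤ) • b k)
    (hi : (e i : ℤ) • b' i ∈ b.diagSpan d) (hj : (e j : ℤ) • b' j ∈ b.diagSpan d)
    (hi' : (d i : ℤ) • b i ∈ b'.diagSpan e) (hj' : (d j : ℤ) • b j ∈ b'.diagSpan e) :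
    b'.diagSpan e = b.diagSpan d := by
  refine le_antisymm ((diagSpan_le_iff ..).2 fun k => ?_) ((diagSpan_le_iff ..).2 fun k => ?_)
  all_goals
    rcases eq_or_ne k i with rfl | hki
    · assumption
    rcases eq_or_ne k j with rfl | hkj
    · assumption
  · rw [hne k hki hkj]
    exact smul_mem_diagSpan b d k
  · rw [← hne k hki hkj]
    exact smul_mem_diagSpan b' e k

theorem exists_diagSpan_gcd_lcm_eq [DecidableEq ι] (b : Basis ι ℤ M) (d : ι → ℕ) {i j : ι}
    (hij : i ≠ j) : ∃ b' : Basis ι ℤ M,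
      b'.diagSpan (update (update d i (Nat.gcd (d i) (d j))) j (Nat.lcm (d i) (d j))) =
        b.diagSpan d := by
  obtain ⟨a, c, hac, ha, hc⟩ := Nat.exists_coprime (d i) (d j)
  obtain ⟨u, v, hbez⟩ := Nat.isCoprime_iff_coprime.2 hac
  have hgl := Nat.gcd_mul_lcm (d i) (d j)
  set g := Nat.gcd (d i) (d j)
  set L := Nat.lcm (d i) (d j)
  have hL : (L : ℤ) = a * c * g := by
    suffices L = a * c * g by exact_mod_cast this
    rcases Nat.eq_zero_or_pos g with hg | hg
    · simp [L, ha, hg]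
    · refine Nat.eq_of_mul_eq_mul_left hg ?_
      rw [hgl, ha, hc]
      ring
  have hi : (d i : ℤ) = a * g := by exact_mod_cast ha
  have hj : (d j : ℤ) = c * g := by exact_mod_cast hc
  set b' := b.twoByTwoBasis hij (p := a) (q := -v) (r := c) (s := u) (by linear_combination hbez)
  have hb'i : b' i = (a : ℤ) • b i + (c : ℤ) • b j := twoByTwoBasis_apply_left ..
  have hb'j : b' j = (-v) • b i + u • b j := twoByTwoBasis_apply_right ..
  have combo {S : Submodule ℤ M} {x y : M} (α β : ℤ) (hx : x ∈ S) (hy : y ∈ S) :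
      α • x + β • y ∈ S :=
    S.add_mem (S.smul_mem α hx) (S.smul_mem β hy)
  have hb := smul_mem_diagSpan b d
  have hgi : (g : ℤ) • b' i ∈ b'.diagSpan (update (update d i g) j L) := by
    simpa [hij] using smul_mem_diagSpan b' (update (update d i g) j L) i
  have hLj : (L : ℤ) • b' j ∈ b'.diagSpan (update (update d i g) j L) := by
    simpa using smul_mem_diagSpan b' (update (update d i g) j L) j
  refine ⟨b', diagSpan_eq_of_pair b b' (i := i) (j := j) (fun k hki hkj => ?_) ?_ ?_ ?_ ?_⟩
  · simp [hki, hkj, b', twoByTwoBasis_apply_of_ne]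
  · convert combo 1 1 (hb i) (hb j) using 1
    simp only [update_of_ne hij, update_self, hb'i, hi, hj]
    module
  · convert combo (-(v * c)) (u * a) (hb i) (hb j) using 1
    simp only [update_self, hb'j, hL, hi, hj]
    module
  · convert combo (u * a) (-1) hgi hLj using 1
    rw [hb'i, hb'j, hL, hi]
    linear_combination (norm := module) (-(a * g) : ℤ) • hbez • b i
  · convert combo (v * c) 1 hgi hLj using 1
    rw [hb'i, hb'j, hL, hj]
    linear_combination (norm := module) (-(c * g) : ℤ) • hbez • b j

/-- Termination: the gcd/lcm move on a pair `i < j` with `¬ d i ∣ d j` strictly decreases `d`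
lexicographically. -/
theorem exists_isDvdChain_diagSpan_eq [LinearOrder ι] [Finite ι] (b : Basis ι ℤ M) {d : ι → ℕ}
    (hd : ∀ i, d i ≠ 0) :
    ∃ (b' : Basis ι ℤ M) (c : ι → ℕ), (∀ i, c i ≠ 0) ∧ IsDvdChain c ∧
      b'.diagSpan c = b.diagSpan d := by
  generalize hx : toLex d = x
  induction x using WellFoundedLT.induction generalizing b d with
  | ind x ih =>
  by_cases hc : IsDvdChain d
  · exact ⟨b, d, hd, hc, rfl⟩
  obtain ⟨i, j, hij, hnd⟩ : ∃ i j, i < j ∧ ¬ d i ∣ d j := by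
    simp only [IsDvdChain, not_forall] at hc
    obtain ⟨i, j, hle, hnd⟩ := hc
    exact ⟨i, j, lt_of_le_of_ne hle (by rintro rfl; exact hnd dvd_rfl), hnd⟩
  obtain ⟨b₁, hb₁⟩ := b.exists_diagSpan_gcd_lcm_eq d hij.ne
  have hgcd : Nat.gcd (d i) (d j) < d i :=
    lt_of_le_of_ne (Nat.gcd_le_left _ (Nat.pos_of_ne_zero (hd i)))
      fun h => hnd (h ▸ Nat.gcd_dvd_right _ _)
  have hd₁ : ∀ k, update (update d i (Nat.gcd (d i) (d j))) j (Nat.lcm (d i) (d j)) k ≠ 0 := by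
    intro k
    simp only [update_apply]
    split_ifs
    exacts [Nat.lcm_ne_zero (hd i) (hd j),
      (Nat.gcd_pos_of_pos_left _ (Nat.pos_of_ne_zero (hd i))).ne', hd k]
  obtain ⟨b', c, hc0, hcc, hb'⟩ := ih _ (hx ▸ Pi.toLex_update_update_lt hij hgcd) b₁ hd₁ rfl
  exact ⟨b', c, hc0, hcc, hb'.trans hb₁⟩

noncomputable def toPiZMod (b : Basis ι ℤ M) (d : ι → ℕ) : M →+ ∀ i, ZMod (d i) :=
  AddMonoidHom.mk' (fun x i => b.repr x i) fun x y => by ext; simp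

theorem toPiZMod_surjective [Fintype ι] (b : Basis ι ℤ M) (d : ι → ℕ) :
    Surjective (b.toPiZMod d) := fun y =>
  ⟨b.equivFun.symm fun i => (y i).cast, funext fun i => by
    rw [toPiZMod, AddMonoidHom.mk'_apply, ← b.equivFun_apply, b.equivFun.apply_symm_apply,
      ZMod.intCast_cast, ZMod.cast_id', id]⟩

theorem ker_toPiZMod [Fintype ι] (b : Basis ι ℤ M) (d : ι → ℕ) :
    (b.toPiZMod d).ker = (b.diagSpan d).toAddSubgroup := by
  ext x
  simp [toPiZMod, mem_diagSpan_iff, funext_iff, ZMod.intCast_zmod_eq_zero_iff_dvd]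

end Module.Basis

theorem AddSubgroup.exists_basis_diagSpan_eq {M : Type*} [AddCommGroup M] [Module.Free ℤ M]
    [Module.Finite ℤ M] (H : AddSubgroup M) [H.FiniteIndex] :
    ∃ (b : Basis (Fin (finrank ℤ M)) ℤ M) (d : Fin (finrank ℤ M) → ℕ), (∀ i, d i ≠ 0) ∧
      (b.diagSpan d).toAddSubgroup = H := by
  obtain ⟨b, a, bH, hbH⟩ := Submodule.exists_smith_normal_form_of_rank_eq (finBasis ℤ M)
    (N := AddSubgroup.toIntSubmodule H) (H.finrank_eq_of_finiteIndex)
  refine ⟨b, fun i => (a i).natAbs, fun i => Int.natAbs_ne_zero.2 fun h => bH.ne_zero i ?_, ?_⟩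
  · exact Subtype.ext (by simp [hbH, h])
  · have hH : AddSubgroup.toIntSubmodule H = Submodule.span ℤ (Set.range fun i => a i • b i) := by
      rw [← Submodule.range_subtype (AddSubgroup.toIntSubmodule H), LinearMap.range_eq_map,
        ← bH.span_eq, Submodule.map_span, ← Set.range_comp]
      simp only [Function.comp_def, Submodule.subtype_apply, hbH]
    ext x
    change x ∈ b.diagSpan _ ↔ x ∈ AddSubgroup.toIntSubmodule H
    rw [hH, b.mem_diagSpan_iff, b.mem_span_range_smul_iff]
    exact forall_congr' fun i => Int.natAbs_dvd

theorem AddMonoidHom.exists_basis_isDvdChain_ker_eq {M A : Type*} [AddCommGroup M]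
    [Module.Free ℤ M] [Module.Finite ℤ M] [AddCommGroup A] [Finite A] (f : M →+ A) :
    ∃ (b : Basis (Fin (finrank ℤ M)) ℤ M) (d : Fin (finrank ℤ M) → ℕ), (∀ i, d i ≠ 0) ∧
      IsDvdChain d ∧ f.ker = (b.diagSpan d).toAddSubgroup := by
  obtain ⟨b₀, d₀, hd₀, hK⟩ := f.ker.exists_basis_diagSpan_eq
  obtain ⟨b, d, hd, hdc, hb⟩ := b₀.exists_isDvdChain_diagSpan_eq hd₀
  exact ⟨b, d, hd, hdc, by rw [hb, hK]⟩

/-- Let `T` be a finitely generated free ℤ-module, `A` a finite abelian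
group and `f, f' : T → A` two surjective group homomorphisms. Then there are an
automorphism `λ` of `T` and an automorphism `ψ` of `A` with `f' = ψ ∘ f ∘ λ`. -/
theorem surjections_onto_finite_abelian_equivalent
    {T : Type*} [AddCommGroup T] [Module ℤ T] [Module.Free ℤ T] [Module.Finite ℤ T]
    {A : Type*} [AddCommGroup A] [Finite A]
    (f f' : T →+ A) (hf : Function.Surjective f) (hf' : Function.Surjective f') :
    ∃ (l : T ≃ₗ[ℤ] T) (ψ : A ≃+ A), ∀ t : T, f' t = ψ (f (l t)) := by
  obtain rfl : ‹Module ℤ T› = AddCommGroup.toIntModule T := Subsingleton.elim _ _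
  obtain ⟨b, d, hd, hdc, hK⟩ := f.exists_basis_isDvdChain_ker_eq
  obtain ⟨b', d', hd', hdc', hK'⟩ := f'.exists_basis_isDvdChain_ker_eq
  obtain ⟨φ, -⟩ := AddMonoidHom.exists_addEquiv_of_ker_eq hf (b.toPiZMod_surjective d)
    (hK.trans (b.ker_toPiZMod d).symm)
  obtain ⟨φ', -⟩ := AddMonoidHom.exists_addEquiv_of_ker_eq hf' (b'.toPiZMod_surjective d')
    (hK'.trans (b'.ker_toPiZMod d').symm)
  obtain rfl : d = d' := hdc.eq_of_addEquiv_pi_zmod hdc' hd hd' (φ.symm.trans φ')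
  -- `l` sends `b' i` to `b i`, hence `ker f'` onto `ker f`
  let l := b'.repr ≪≫ₗ b.repr.symm
  obtain ⟨ψ, hψ⟩ := AddMonoidHom.exists_addEquiv_of_ker_eq (f := f.comp l.toAddMonoidHom)
    (hf.comp l.surjective) hf' <| by
      ext t
      rw [AddMonoidHom.mem_ker, AddMonoidHom.comp_apply, ← AddMonoidHom.mem_ker, hK, hK',
        Submodule.mem_toAddSubgroup, Submodule.mem_toAddSubgroup, b.mem_diagSpan_iff,
        b'.mem_diagSpan_iff]
      simp [l]
  exact ⟨l, ψ, hψ⟩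
end

section
/- Let r ≥ 1 and s ≥ 0 be integers and let ψ : ℤ³ → ℤ³ be the ℤ-linear endomorphism defined by ψ(a, b, c) = (2^{r+1}·b, 2^r·a, 2^s·c). Then for every integer m ≥ 1 and every integer k ≥ 0, the m-th iterate ψ^m is not equal to multiplication by 2^k on ℤ³. (Odd powers of ψ are not scalar since they interchange the first two coordinates up to 2-power factors, and for even powers one has ψ²(0,1,0) = 2^{2r+1}·(0,1,0) while ψ²(0,0,1) = 2^{2s}·(0,0,1), and 2r + 1 ≠ 2s.) -/
/-!
`ψ²` is diagonal, scaling the first two coordinates by `2^(2r+1)` and the third by `2^(2s)`.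
An even iterate `ψ^(2t)` therefore scales by the distinct powers `2^((2r+1)t)` and `2^(2st)`,
odd against even exponent, while an odd iterate moves the first coordinate axis to the second.
-/

namespace SuzukiEndomorphism

variable {r s : ℕ} {ψ : ℤ × ℤ × ℤ → ℤ × ℤ × ℤ}
  (hψ : ∀ a b c : ℤ, ψ (a, b, c) = (2 ^ (r + 1) * b, 2 ^ r * a, 2 ^ s * c))
include hψ

theorem iterate_two_apply (a b c : ℤ) :
    ψ^[2] (a, b, c) = (2 ^ (2 * r + 1) * a, 2 ^ (2 * r + 1) * b, 2 ^ (2 * s) * c) := by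
  simp only [Function.iterate_succ_apply, Function.iterate_zero_apply, hψ, Prod.mk.injEq]
  refine ⟨?_, ?_, ?_⟩ <;> ring

theorem iterate_two_mul_apply (t : ℕ) (a b c : ℤ) :
    ψ^[2 * t] (a, b, c) =
      (2 ^ ((2 * r + 1) * t) * a, 2 ^ ((2 * r + 1) * t) * b, 2 ^ (2 * s * t) * c) := by
  rw [Function.iterate_mul]
  induction t with
  | zero => simp
  | succ t ih =>
    rw [Function.iterate_succ_apply', ih, iterate_two_apply hψ, Prod.mk.injEq, Prod.mk.injEq]
    refine ⟨?_, ?_, ?_⟩ <;> ring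

theorem iterate_two_mul_ne_smul {t : ℕ} (ht : t ≠ 0) (k : ℕ) :
    ψ^[2 * t] ≠ fun v => (2 ^ k : ℤ) • v := by
  intro h
  have h₁ := congrFun h (1, 0, 0)
  have h₃ := congrFun h (0, 0, 1)
  simp only [iterate_two_mul_apply hψ, Prod.smul_mk, smul_eq_mul, Prod.mk.injEq, mul_one,
    mul_zero] at h₁ h₃
  have hk₁ : (2 * r + 1) * t = k := Int.pow_right_injective (by decide) h₁.1
  have hk₃ : 2 * s * t = k := Int.pow_right_injective (by decide) h₃.2.2
  have : 2 * r + 1 = 2 * s :=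
    Nat.eq_of_mul_eq_mul_right (Nat.pos_of_ne_zero ht) (hk₁.trans hk₃.symm)
  omega

theorem iterate_two_mul_add_one_ne_smul (t k : ℕ) :
    ψ^[2 * t + 1] ≠ fun v => (2 ^ k : ℤ) • v := by
  intro h
  have h₁ := congrFun h (1, 0, 0)
  rw [Function.iterate_succ_apply', iterate_two_mul_apply hψ, hψ] at h₁
  simp only [Prod.smul_mk, smul_eq_mul, Prod.mk.injEq, mul_one, mul_zero] at h₁
  exact (pow_ne_zero k two_ne_zero) h₁.1.symm

end SuzukiEndomorphism

theorem suzuki_no_smooth_embedding_key_general (r : ℕ) (s : ℕ)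
    (ψ : ℤ × ℤ × ℤ → ℤ × ℤ × ℤ)
    (hψ : ∀ a b c : ℤ, ψ (a, b, c) = (2 ^ (r + 1) * b, 2 ^ r * a, 2 ^ s * c)) :
    ∀ m : ℕ, 1 ≤ m → ∀ k : ℕ, ψ^[m] ≠ fun v => (2 ^ k : ℤ) • v := by
  intro m hm k
  obtain ⟨t, rfl | rfl⟩ := Nat.even_or_odd' m
  · exact SuzukiEndomorphism.iterate_two_mul_ne_smul hψ (by omega) k
  · exact SuzukiEndomorphism.iterate_two_mul_add_one_ne_smul hψ t k

/-- Let `r ≥ 1` and `s ≥ 0` and let `ψ : ℤ³ → ℤ³` be the ℤ-linear map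
`ψ(a, b, c) = (2^{r+1}·b, 2^r·a, 2^s·c)`. Then no iterate `ψ^m` with `m ≥ 1` equals
multiplication by a power `2^k` of `2` on `ℤ³`. -/
theorem suzuki_no_smooth_embedding_key (r : ℕ) (hr : 1 ≤ r) (s : ℕ)
    (ψ : ℤ × ℤ × ℤ → ℤ × ℤ × ℤ)
    (hψ : ∀ a b c : ℤ, ψ (a, b, c) = (2 ^ (r + 1) * b, 2 ^ r * a, 2 ^ s * c)) :
    ∀ m : ℕ, 1 ≤ m → ∀ k : ℕ, ψ^[m] ≠ fun v => (2 ^ k : ℤ) • v :=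
  suzuki_no_smooth_embedding_key_general r s ψ hψ
end

section
/- Let X, X₁, X₂ be ℤ-modules, let σ₁ : X₁ → X and σ₂ : X₂ → X be surjective ℤ-module homomorphisms, let K ⊆ X be a submodule, and let P ⊆ X₁ be a submodule. Set S = {(x₁, x₂) ∈ X₁ ⊕ X₂ : σ₁(x₁) = σ₂(x₂)}, let A = X/K with canonical projection h : X → A, and let f : S → A be the (well-defined) homomorphism f(x₁, x₂) = σ₁(x₁) + K. Set A₁ = X/σ₁(P) with canonical projection h₁ : X → A₁, set S₁ = X₁/P, and let f₁ : S₁ → A₁ be the well-defined map f₁(x₁ + P) = σ₁(x₁) + σ₁(P). Then f is surjective, and the ℤ-module homomorphism (x, (s₁, s₂)) ↦ (x, s₁ + P) from the fibre product {(x, s) ∈ X ⊕ S : h(x) = f(s)} to the fibre product {(x, y) ∈ X ⊕ S₁ : h₁(x) = f₁(y)} is surjective. -/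
/-!
A point `(x, x₁ + P)` of the target fibre product has `x - σ₁ x₁ ∈ σ₁(P)`, so `x₁` can be
corrected by an element of `P` to some `x₁'` with `σ₁ x₁' = x` exactly. Surjectivity of `σ₂`
completes `x₁'` to a point `s` of `S`, and `(x, s)` is the required preimage. The same
surjectivity makes `S → X₁` onto, so `f` is a composite of surjections.
-/

theorem fpFst_surjective {R X₁ X₂ A : Type*} [Semiring R] [AddCommMonoid X₁]
    [AddCommMonoid X₂] [AddCommMonoid A] [Module R X₁] [Module R X₂] [Module R A]
    (h₁ : X₁ →ₗ[R] A) {h₂ : X₂ →ₗ[R] A} (hh₂ : Function.Surjective h₂) :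
    Function.Surjective (fpFst h₁ h₂) := fun x₁ ↦
  let ⟨x₂, hx₂⟩ := hh₂ (h₁ x₁)
  ⟨⟨(x₁, x₂), hx₂.symm⟩, rfl⟩

theorem exists_eq_mkQ_eq_of_mem_fibreProd_mapQ {R M N : Type*} [Ring R] [AddCommGroup M]
    [AddCommGroup N] [Module R M] [Module R N] (f : M →ₗ[R] N) (P : Submodule R M)
    {b : N × (M ⧸ P)}
    (hb : b ∈ fibreProd (P.map f).mkQ (P.mapQ (P.map f) f (Submodule.le_comap_map f P))) :
    ∃ m, f m = b.1 ∧ P.mkQ m = b.2 := by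
  obtain ⟨x, y⟩ := b
  obtain ⟨m, rfl⟩ := P.mkQ_surjective y
  have hx : x - f m ∈ P.map f := by
    rw [← Submodule.Quotient.eq]
    exact hb
  obtain ⟨p, hp, hfp⟩ := hx
  refine ⟨m + p, ?_, ?_⟩
  · simp [hfp]
  · simpa using (Submodule.Quotient.mk_eq_zero P).mpr hp

/-- Let `σ₁ : X₁ → X`, `σ₂ : X₂ → X` be surjective ℤ-module
homomorphisms, `K ⊆ X` and `P ⊆ X₁` submodules. Let `S = {(x₁,x₂) : σ₁ x₁ = σ₂ x₂}`,
`A = X/K` with projection `h`, and `f : S → A`, `f(x₁,x₂) = σ₁ x₁ + K`. Let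
`A₁ = X/σ₁(P)` with projection `h₁`, `S₁ = X₁/P`, and `f₁ : S₁ → A₁`,
`f₁(x₁ + P) = σ₁ x₁ + σ₁(P)`. Then `f` is surjective, and the homomorphism
`(x, (s₁, s₂)) ↦ (x, s₁ + P)` from the fibre product `{(x, s) ∈ X ⊕ S : h x = f s}` to
the fibre product `{(x, y) ∈ X ⊕ S₁ : h₁ x = f₁ y}` is surjective. -/
theorem completion_of_embeddings_key
    {X X₁ X₂ : Type*} [AddCommGroup X] [AddCommGroup X₁] [AddCommGroup X₂]
    [Module ℤ X] [Module ℤ X₁] [Module ℤ X₂]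
    (σ₁ : X₁ →ₗ[ℤ] X) (σ₂ : X₂ →ₗ[ℤ] X)
    (hσ₁ : Function.Surjective σ₁) (hσ₂ : Function.Surjective σ₂)
    (K : Submodule ℤ X) (P : Submodule ℤ X₁) :
    Function.Surjective (K.mkQ ∘ₗ σ₁ ∘ₗ fpFst σ₁ σ₂) ∧
    ∀ b ∈ fibreProd (Submodule.map σ₁ P).mkQ
        (Submodule.mapQ P (Submodule.map σ₁ P) σ₁
          (fun x hx => Submodule.mem_comap.mpr (Submodule.mem_map_of_mem hx))),
      ∃ a ∈ fibreProd K.mkQ (K.mkQ ∘ₗ σ₁ ∘ₗ fpFst σ₁ σ₂),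
        (LinearMap.prodMap (LinearMap.id : X →ₗ[ℤ] X) (P.mkQ ∘ₗ fpFst σ₁ σ₂)) a = b := by
  refine ⟨K.mkQ_surjective.comp (hσ₁.comp (fpFst_surjective σ₁ hσ₂)), fun b hb ↦ ?_⟩
  obtain ⟨x₁, hx, hy⟩ := exists_eq_mkQ_eq_of_mem_fibreProd_mapQ σ₁ P hb
  obtain ⟨s, rfl⟩ := fpFst_surjective σ₁ hσ₂ x₁
  exact ⟨(σ₁ (fpFst σ₁ σ₂ s), s), rfl, Prod.ext hx hy⟩
end
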